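/- arXiv:1809.02517 — 5 statements merged into one kernel-verified Lean document; each statement's English description precedes it below -/
import Mathlib

section
/- If the k-period of a string S (of length m) is strictly larger than d, then among any d consecutive positions of a text T, at most one position can be the ending position of a k-mismatch occurrence of S. -/
/-- Hamming distance between the length-`n` strings `X[0..n-1]` and `Y[0..n-1]`
(strings are given as functions `ℕ → α`). -/
def HDn {α : Type*} [DecidableEq α] (n : ℕ) (X Y : ℕ → α) : ℕ :=
  hammingDist (fun i : Fin n => X i.val) (fun i : Fin n => Y i.val)

/-- `HD(S[ρ+1..n], S[1..n-ρ])`: Hamming distance between the length-`n` string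
`S` shifted by `ρ` and itself. -/
def shiftHD {α : Type*} [DecidableEq α] (n : ℕ) (S : ℕ → α) (ρ : ℕ) : ℕ :=
  HDn (n - ρ) (fun i => S (ρ + i)) S

/-- The `k`-period of a length-`n` string `S`: the minimal `π > 0` with
`HD(S[π+1..n], S[1..n-π]) ≤ 2k`. -/
noncomputable def kPeriod {α : Type*} [DecidableEq α] (k n : ℕ) (S : ℕ → α) : ℕ :=
  sInf {π | 0 < π ∧ shiftHD n S π ≤ 2 * k}

/- Two `k`-mismatch occurrences of `P` starting `ρ` positions apart overlap in a stretch of text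
that is within `k` mismatches of both `P[ρ..]` and a prefix of `P`, so by the triangle inequality
`HD(P[ρ..], P) ≤ 2k`. Hence `ρ = 0` or `ρ` is at least the `k`-period, which exceeds `d`. -/

section HammingDistance

variable {α : Type*} [DecidableEq α]

lemma HDn_comm (n : ℕ) (X Y : ℕ → α) : HDn n X Y = HDn n Y X :=
  hammingDist_comm _ _

lemma HDn_triangle (n : ℕ) (X Y Z : ℕ → α) : HDn n X Z ≤ HDn n X Y + HDn n Y Z :=
  hammingDist_triangle _ _ _

lemma HDn_mono {n n' : ℕ} (h : n' ≤ n) (X Y : ℕ → α) : HDn n' X Y ≤ HDn n X Y := by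
  unfold HDn hammingDist
  refine Finset.card_le_card_of_injOn (Fin.castLE h) (fun i hi => ?_)
    (Fin.castLE_injective h).injOn
  simpa using hi

lemma HDn_drop_le (n ρ : ℕ) (X Y : ℕ → α) :
    HDn (n - ρ) (fun i => X (ρ + i)) (fun i => Y (ρ + i)) ≤ HDn n X Y := by
  unfold HDn hammingDist
  refine Finset.card_le_card_of_injOn (fun i => ⟨ρ + i, by omega⟩) (fun i hi => ?_)
    (fun a _ b _ hab => Fin.ext (by simpa using congrArg Fin.val hab))
  simpa using hi

lemma shiftHD_le_of_HDn_le {k n ρ : ℕ} {P X : ℕ → α} (hX : HDn n P X ≤ k)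
    (hXρ : HDn n P (fun i => X (ρ + i)) ≤ k) : shiftHD n P ρ ≤ 2 * k :=
  calc shiftHD n P ρ
      ≤ HDn (n - ρ) (fun i => P (ρ + i)) (fun i => X (ρ + i))
          + HDn (n - ρ) (fun i => X (ρ + i)) P := HDn_triangle _ _ _ _
    _ ≤ HDn n P X + HDn n P (fun i => X (ρ + i)) := by
        rw [HDn_comm (n - ρ) _ P]
        exact add_le_add (HDn_drop_le n ρ P X) (HDn_mono (Nat.sub_le n ρ) _ _)
    _ ≤ 2 * k := by omega

lemma kPeriod_le {k n ρ : ℕ} {S : ℕ → α} (hρ : 0 < ρ) (h : shiftHD n S ρ ≤ 2 * k) :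
    kPeriod k n S ≤ ρ :=
  Nat.sInf_le ⟨hρ, h⟩

end HammingDistance

/-- If the `k`-period of a pattern `P` of length `m` is larger than `d`, then among
any `d` consecutive positions of a text `T`, at most one can be the ending position
of a `k`-mismatch occurrence of `P`: two occurrences (starting at `t₁ ≤ t₂`, hence
ending within a window of `d` consecutive positions when `t₂ - t₁ < d`) coincide. -/
theorem stmt3 {α : Type*} [DecidableEq α] (k d m : ℕ) (P T : ℕ → α)
    (hper : d < kPeriod k m P) (t₁ t₂ : ℕ)
    (h1 : HDn m P (fun i => T (t₁ + i)) ≤ k)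
    (h2 : HDn m P (fun i => T (t₂ + i)) ≤ k)
    (hle : t₁ ≤ t₂) (hwin : t₂ - t₁ < d) : t₁ = t₂ := by
  by_contra hne
  obtain ⟨ρ, rfl⟩ := Nat.exists_eq_add_of_le hle
  have hshift : shiftHD m P ρ ≤ 2 * k :=
    shiftHD_le_of_HDn_le h1 (by simpa only [Nat.add_assoc] using h2)
  have hperiod : kPeriod k m P ≤ ρ := kPeriod_le (by omega) hshift
  omega
end

section
/- For the concatenation Z = XY of strings X and Y, φ_j(Z) ≡ φ_j(X) + Σ_{l=0}^{j} C(j,l)·|X|^{j-l}·φ_l(Y) (mod p), where φ_j(S) = Σ_{i=1}^{|S|} S[i]·i^j mod p. Thus the sketch values of Z are determined by those of X and Y together with |X|. -/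
/-- Sketch component `φ_j(S) = Σ_{i=1}^{|S|} S[i]·i^j` (0-indexed positions
`i` carry weight `(i+1)^j`). -/
def phiJ (p m : ℕ) (S : Fin m → ZMod p) (j : ℕ) : ZMod p :=
  ∑ i : Fin m, S i * ((i.val : ZMod p) + 1) ^ j

/-- For the concatenation `Z = XY` (with `|X| = a`, `|Y| = b`),
`φ_j(Z) = φ_j(X) + Σ_{l=0}^{j} C(j,l)·|X|^{j-l}·φ_l(Y)` mod `p`; thus the sketch
of `Z` is determined by those of `X` and `Y` together with `|X|`. -/
theorem stmt14 (p a b : ℕ) [Fact p.Prime]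
    (X : Fin a → ZMod p) (Y : Fin b → ZMod p) (j : ℕ) :
    phiJ p (a + b) (Fin.append X Y) j =
      phiJ p a X j +
        ∑ l ∈ Finset.range (j + 1),
          (Nat.choose j l : ZMod p) * (a : ZMod p) ^ (j - l) * phiJ p b Y l := by
  unfold phiJ
  rw [Fin.sum_univ_add]
  congr 1
  · apply Finset.sum_congr rfl
    intro i _
    simp [Fin.append_left]
  · simp_rw [Finset.mul_sum]
    rw [Finset.sum_comm]
    apply Finset.sum_congr rfl
    intro i _
    rw [Fin.append_right]
    have : ((Fin.natAdd a i).val : ZMod p) + 1 = ((i.val : ZMod p) + 1) + (a : ZMod p) := by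
      push_cast [Fin.natAdd]
      ring
    rw [this, add_pow]
    rw [Finset.mul_sum]
    apply Finset.sum_congr rfl
    intro l hl
    ring
end

section
/- The mismatch positions and differences are uniquely recoverable from the sketch differences: if t ≤ k and positions 1 ≤ p₁ < ... < p_t ≤ m < p with nonzero values δ₁,...,δ_t in F_p satisfy Σ_i δ_i·p_i^j ≡ s_j (mod p) for j = 0,...,2k, then (t, (p_i), (δ_i)) is the unique such tuple with t ≤ k; i.e., no other set of at most k positions/values yields the same power sums s_0,...,s_{2k}. -/
open Polynomial

open scoped Classical in
/-- Unique recoverability from power sums: a solution is a coefficient function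
`f : ℕ → ZMod p` supported on at most `k` positions inside `{1, …, m}` (with
`m < p`); its power sums are `Σ_{i=1}^m f(i)·i^j`. If two solutions have equal
power sums for all `j = 0, …, 2k`, they are equal. -/
theorem stmt15 (p m k : ℕ) [Fact p.Prime] (hm : m < p) (hk : 1 ≤ k)
    (f g : ℕ → ZMod p)
    (hfsupp : ∀ i, f i ≠ 0 → 1 ≤ i ∧ i ≤ m)
    (hgsupp : ∀ i, g i ≠ 0 → 1 ≤ i ∧ i ≤ m)
    (hfcard : ((Finset.Icc 1 m).filter (fun i => f i ≠ 0)).card ≤ k)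
    (hgcard : ((Finset.Icc 1 m).filter (fun i => g i ≠ 0)).card ≤ k)
    (hsums : ∀ j ≤ 2 * k,
      ∑ i ∈ Finset.Icc 1 m, f i * (i : ZMod p) ^ j =
        ∑ i ∈ Finset.Icc 1 m, g i * (i : ZMod p) ^ j) :
    ∀ i, f i = g i := by
  intro i0
  by_contra hne
  set h : ℕ → ZMod p := fun i => f i - g i with hh
  have hsum0 : ∀ j ≤ 2*k, ∑ i ∈ Finset.Icc 1 m, h i * (i:ZMod p)^j = 0 := by
    intro j hj
    simp only [hh, sub_mul, Finset.sum_sub_distrib]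
    rw [hsums j hj, sub_self]
  set S := (Finset.Icc 1 m).filter (fun i => h i ≠ 0) with hS
  have hScard : S.card ≤ 2*k := by
    have hsub : S ⊆ (Finset.Icc 1 m).filter (fun i => f i ≠ 0) ∪
        (Finset.Icc 1 m).filter (fun i => g i ≠ 0) := by
      intro x hx
      simp only [hS, Finset.mem_filter, Finset.mem_union] at hx ⊢
      rcases hx with ⟨hx1, hx2⟩
      by_cases hf : f x = 0
      · exact Or.inr ⟨hx1, fun hg => hx2 (by simp [hh, hf, hg])⟩
      · exact Or.inl ⟨hx1, hf⟩
    calc S.card ≤ _ := Finset.card_le_card hsub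
      _ ≤ _ + _ := Finset.card_union_le _ _
      _ ≤ 2*k := by omega
  have hne' : h i0 ≠ 0 := sub_ne_zero.mpr hne
  have hi0m : 1 ≤ i0 ∧ i0 ≤ m := by
    by_cases hf : f i0 = 0
    · exact hgsupp i0 (fun hg => hne (by rw [hf, hg]))
    · exact hfsupp i0 hf
  have hmemS : i0 ∈ S := Finset.mem_filter.mpr ⟨Finset.mem_Icc.mpr hi0m, hne'⟩
  -- cast injectivity on [1, m]
  have hinj : ∀ a ∈ Finset.Icc 1 m, ∀ b ∈ Finset.Icc 1 m, a ≠ b →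
      (a : ZMod p) ≠ (b : ZMod p) := by
    intro a ha b hb hab hcast
    apply hab
    have ha' : a < p := lt_of_le_of_lt (Finset.mem_Icc.mp ha).2 hm
    have hb' : b < p := lt_of_le_of_lt (Finset.mem_Icc.mp hb).2 hm
    have := congrArg ZMod.val hcast
    rwa [ZMod.val_cast_of_lt ha', ZMod.val_cast_of_lt hb'] at this
  -- key: any polynomial of degree ≤ 2k is annihilated by h
  have key : ∀ Q : (ZMod p)[X], Q.natDegree ≤ 2*k →
      ∑ i ∈ Finset.Icc 1 m, h i * Q.eval (i:ZMod p) = 0 := by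
    intro Q hQ
    have heval : ∀ x : ZMod p, Q.eval x = ∑ j ∈ Finset.range (2*k+1), Q.coeff j * x^j :=
      fun x => Polynomial.eval_eq_sum_range' (Nat.lt_succ_of_le hQ) x
    simp_rw [heval, Finset.mul_sum]
    rw [Finset.sum_comm]
    apply Finset.sum_eq_zero
    intro j hj
    have hrw : ∑ i ∈ Finset.Icc 1 m, h i * (Q.coeff j * (i:ZMod p)^j)
        = Q.coeff j * ∑ i ∈ Finset.Icc 1 m, h i * (i:ZMod p)^j := by
      rw [Finset.mul_sum]; exact Finset.sum_congr rfl (fun i _ => by ring)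
    rw [hrw, hsum0 j (Nat.lt_succ_iff.mp (Finset.mem_range.mp hj)), mul_zero]
  set P : (ZMod p)[X] := ∏ j ∈ S.erase i0, (X - C (j : ZMod p)) with hP
  have hdeg : P.natDegree ≤ 2*k := by
    have : P.natDegree = ∑ j ∈ S.erase i0, (X - C (j : ZMod p)).natDegree :=
      Polynomial.natDegree_prod_of_monic _ _ (fun j _ => monic_X_sub_C _)
    rw [this]
    simp only [Polynomial.natDegree_X_sub_C]
    rw [Finset.sum_const, smul_eq_mul, mul_one]
    have := Finset.card_erase_le (a := i0) (s := S)
    omega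
  have hzero := key P hdeg
  have hrestrict : ∑ i ∈ Finset.Icc 1 m, h i * P.eval (i:ZMod p)
      = ∑ i ∈ S, h i * P.eval (i:ZMod p) := by
    symm
    apply Finset.sum_subset (Finset.filter_subset _ _)
    intro x hx hxS
    have : h x = 0 := by
      by_contra hc; exact hxS (Finset.mem_filter.mpr ⟨hx, hc⟩)
    simp [this]
  have hsingle : ∑ i ∈ S, h i * P.eval (i:ZMod p) = h i0 * P.eval (i0:ZMod p) := by
    apply Finset.sum_eq_single_of_mem i0 hmemS
    intro b hb hbne
    have : P.eval (b:ZMod p) = 0 := by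
      rw [hP, Polynomial.eval_prod]
      apply Finset.prod_eq_zero (Finset.mem_erase.mpr ⟨hbne, hb⟩)
      simp
    rw [this, mul_zero]
  have hPval : P.eval (i0:ZMod p) ≠ 0 := by
    rw [hP, Polynomial.eval_prod]
    apply Finset.prod_ne_zero_iff.mpr
    intro b hb
    simp only [Polynomial.eval_sub, Polynomial.eval_X, Polynomial.eval_C]
    have hbS := Finset.mem_erase.mp hb
    have hbIcc : b ∈ Finset.Icc 1 m := (Finset.mem_filter.mp hbS.2).1
    exact sub_ne_zero.mpr (hinj i0 (Finset.mem_Icc.mpr hi0m) b hbIcc (fun e => hbS.1 e.symm))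
  rw [hrestrict, hsingle] at hzero
  exact hne' ((mul_eq_zero.mp hzero).resolve_right hPval)
end

section
/- In the communication reduction of the paper: let k, d ≥ 1, let B₁,...,B_d be binary strings of length k (Alice's input split into blocks), and let #, $, $₁,...,$_d be characters distinct from 0 and 1 and from each other. Define patterns P_j = ($_j)^{k+1} # B_j (length 2k+2). For an index i = k·q + r (with 1 ≤ r ≤ k, identifying block q and offset r), define the text T of length 2k+2 as ($_q)^{k+1} followed by the string obtained from $^{k+1} by changing its (r+1)-th symbol to 0. Then HD(P_q, T) ≤ k if and only if B_q[r] = 0, and for all j ≠ q, HD(P_j, T) > k. -/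
/-- The pattern `P_j = ($_j)^{k+1} # B_j` of length `2k+2` (0-indexed):
positions `0..k` hold `$_j`, position `k+1` holds `#`, positions `k+2..2k+1`
hold the block `B_j[1..k]` (0-indexed `Bj 0, …, Bj (k-1)`). -/
def patt16 {α : Type*} (k : ℕ) (hash dollarsj : α) (Bj : ℕ → α) : ℕ → α :=
  fun i => if i < k + 1 then dollarsj else if i = k + 1 then hash else Bj (i - (k + 2))

/-- The text `T = ($_q)^{k+1} W` of length `2k+2`, where `W` is `$^{k+1}` with
its `(r+1)`-th character changed to `0` (0-indexed: position `k+1+r` is `0`). -/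
def txt16 {α : Type*} (k : ℕ) (zero dollar dollarsq : α) (r : ℕ) : ℕ → α :=
  fun i => if i < k + 1 then dollarsq else if i = k + 1 + r then zero else dollar

lemma HDn_eq_card {α : Type*} [DecidableEq α] (n : ℕ) (X Y : ℕ → α) :
    HDn n X Y = ((Finset.range n).filter fun i => X i ≠ Y i).card := by
  unfold HDn hammingDist
  apply Finset.card_bij (fun i _ => i.val)
  · intro i hi
    simp only [Finset.mem_filter, Finset.mem_univ, true_and] at hi
    simp only [Finset.mem_filter, Finset.mem_range]
    exact ⟨i.isLt, hi⟩
  · intro a _ b _ h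
    exact Fin.ext h
  · intro b hb
    simp only [Finset.mem_filter, Finset.mem_range] at hb
    exact ⟨⟨b, hb.1⟩, by simp [hb.2], rfl⟩

/-- Communication reduction of the paper: with the blocks `B_j` binary and the
symbols `#, $, $_1, …, $_d` pairwise distinct and distinct from `0, 1`, for the
index `i = k·q + r` (with `1 ≤ r ≤ k`): `HD(P_q, T) ≤ k` iff `B_q[r] = 0`, and
`HD(P_j, T) > k` for every `j ≠ q`. -/
theorem stmt16 {α : Type*} [DecidableEq α] (k d : ℕ) (hk : 1 ≤ k)
    (zero one hash dollar : α) (dollars : Fin d → α) (B : Fin d → ℕ → α)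
    (h01 : zero ≠ one) (hh0 : hash ≠ zero) (hh1 : hash ≠ one)
    (hd0 : dollar ≠ zero) (hd1 : dollar ≠ one) (hdh : dollar ≠ hash)
    (hds : ∀ j, dollars j ≠ zero ∧ dollars j ≠ one ∧ dollars j ≠ hash ∧ dollars j ≠ dollar)
    (hdd : ∀ j j', j ≠ j' → dollars j ≠ dollars j')
    (hB : ∀ j i, i < k → B j i = zero ∨ B j i = one)
    (q : Fin d) (r : ℕ) (hr1 : 1 ≤ r) (hrk : r ≤ k) :
    (HDn (2 * k + 2) (patt16 k hash (dollars q) (B q)) (txt16 k zero dollar (dollars q) r) ≤ k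
      ↔ B q (r - 1) = zero) ∧
    (∀ j, j ≠ q →
      k < HDn (2 * k + 2) (patt16 k hash (dollars j) (B j)) (txt16 k zero dollar (dollars q) r)) := by

  have hrk' : r - 1 < k := by omega
  constructor
  · rw [HDn_eq_card]
    constructor
    · intro hle
      rcases hB q (r-1) hrk' with h0 | h1
      · exact h0
      · exfalso
        have hsub : Finset.Ico (k+1) (2*k+2) ⊆ (Finset.range (2*k+2)).filter
            (fun i => patt16 k hash (dollars q) (B q) i ≠ txt16 k zero dollar (dollars q) r i) := by
          intro i hi
          simp only [Finset.mem_Ico] at hi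
          simp only [Finset.mem_filter, Finset.mem_range]
          refine ⟨hi.2, ?_⟩
          simp only [patt16, txt16]
          have h2 : ¬ i < k + 1 := by omega
          rw [if_neg h2, if_neg h2]
          rcases eq_or_ne i (k+1) with h | h
          · rw [if_pos h]
            have h3 : i ≠ k + 1 + r := by omega
            rw [if_neg h3]
            exact hdh.symm
          · rw [if_neg h]
            rcases eq_or_ne i (k+1+r) with he | he
            · rw [if_pos he]
              have hr' : i - (k+2) = r - 1 := by omega
              rw [hr', h1]
              exact fun e => h01 e.symm
            · rw [if_neg he]
              rcases hB q (i - (k+2)) (by omega) with hb | hb <;> rw [hb]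
              · exact fun e => hd0 e.symm
              · exact fun e => hd1 e.symm
        have hcard := Finset.card_le_card hsub
        rw [Nat.card_Ico] at hcard
        omega
    · intro h0
      have hsub : (Finset.range (2*k+2)).filter
          (fun i => patt16 k hash (dollars q) (B q) i ≠ txt16 k zero dollar (dollars q) r i)
          ⊆ (Finset.Ico (k+1) (2*k+2)).erase (k+1+r) := by
        intro i hi
        simp only [Finset.mem_filter, Finset.mem_range] at hi
        obtain ⟨hin, hne⟩ := hi
        simp only [patt16, txt16] at hne
        rw [Finset.mem_erase, Finset.mem_Ico]
        constructor
        · intro he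
          apply hne
          subst he
          have h2 : ¬ (k+1+r < k+1) := by omega
          have h3 : k+1+r ≠ k+1 := by omega
          rw [if_neg h2, if_neg h3, if_neg h2, if_pos rfl]
          have hr' : k+1+r - (k+2) = r - 1 := by omega
          rw [hr', h0]
        · refine ⟨?_, hin⟩
          by_contra hlt
          push_neg at hlt
          exact hne (by rw [if_pos hlt, if_pos hlt])
      have hcard := Finset.card_le_card hsub
      have hmem : k+1+r ∈ Finset.Ico (k+1) (2*k+2) := by
        rw [Finset.mem_Ico]; omega
      rw [Finset.card_erase_of_mem hmem, Nat.card_Ico] at hcard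
      omega
  · intro j hj
    rw [HDn_eq_card]
    have hsub : Finset.range (k+1) ⊆ (Finset.range (2*k+2)).filter
        (fun i => patt16 k hash (dollars j) (B j) i ≠ txt16 k zero dollar (dollars q) r i) := by
      intro i hi
      simp only [Finset.mem_range] at hi
      simp only [Finset.mem_filter, Finset.mem_range]
      refine ⟨by omega, ?_⟩
      simp only [patt16, txt16, if_pos hi]
      exact hdd j q hj
    have hcard := Finset.card_le_card hsub
    rw [Finset.card_range] at hcard
    omega
end

section
/- Any randomized one-way streaming algorithm solving dictionary matching with k mismatches on a dictionary of d patterns correctly with probability > 2/3 must use Ω(kd) bits of memory, given that the one-way randomized communication complexity of Index on n-bit strings is Ω(n). -/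
open scoped Classical

/-- A deterministic streaming algorithm for dictionary matching with `d`
patterns using `b` bits of memory: it preprocesses the dictionary into a memory
state, updates the state on each arriving text character, and reports from the
state the set of patterns with a `k`-mismatch occurrence ending at the current
position. Characters are natural numbers. -/
structure DetAlg (d b : ℕ) where
  init : (Fin d → List ℕ) → Fin (2 ^ b)
  step : Fin (2 ^ b) → ℕ → Fin (2 ^ b)
  out : Fin (2 ^ b) → Finset (Fin d)

/-- Number of mismatches between two equal-length lists. -/
def listHD (X Y : List ℕ) : ℕ :=
  (List.zipWith (fun a b => if a = b then (0 : ℕ) else 1) X Y).sum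

/-- `P` has a `kk`-mismatch occurrence ending at the last position of `T`. -/
def occursEnd (kk : ℕ) (P T : List ℕ) : Prop :=
  P.length ≤ T.length ∧ listHD P (T.drop (T.length - P.length)) ≤ kk

/-- The memory state after processing text `T` on dictionary `D`. -/
def runAlg {d b : ℕ} (A : DetAlg d b) (D : Fin d → List ℕ) (T : List ℕ) : Fin (2 ^ b) :=
  T.foldl A.step (A.init D)

/-- A randomized streaming algorithm (a family of deterministic algorithms
indexed by a finite seed set `R`, seed chosen uniformly) is correct if for every
dictionary and every text, with probability `> 2/3` it reports exactly the set
of patterns with a `kk`-mismatch occurrence ending at the current position. -/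
def StreamCorrect (kk d b : ℕ) (R : Type) [Fintype R] (A : R → DetAlg d b) : Prop :=
  ∀ D : Fin d → List ℕ, ∀ T : List ℕ,
    (2 : ℝ) / 3 <
      ((Finset.univ.filter (fun ρ : R =>
          (A ρ).out (runAlg (A ρ) D T) =
            Finset.univ.filter (fun jj => occursEnd kk (D jj) T))).card : ℝ) /
        (Fintype.card R : ℝ)

/-- The Ω(n) one-way randomized communication lower bound for Index
(Kremer–Nisan–Ron): any one-way protocol (Alice sends a `b`-bit message
depending on her input `x ∈ {0,1}ⁿ` and the shared randomness; Bob must output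
`x_i` correctly with probability `> 2/3`) requires `b = Ω(n)`. -/
def IndexLB : Prop :=
  ∃ c : ℝ, 0 < c ∧
    ∀ (n b : ℕ) (R : Type) [Fintype R] [Nonempty R]
      (msg : (Fin n → Bool) → R → Fin (2 ^ b)) (bob : Fin n → Fin (2 ^ b) → R → Bool),
      (∀ (x : Fin n → Bool) (i : Fin n),
        (2 : ℝ) / 3 <
          ((Finset.univ.filter (fun ρ : R => bob i (msg x ρ) ρ = x i)).card : ℝ) /
            (Fintype.card R : ℝ)) →
      c * (n : ℝ) ≤ (b : ℝ)

/-!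
Alice encodes `x ∈ {0,1}^(k·d)` as `d` patterns: pattern `j` is `k + 1` copies of a sentinel `j`,
a separator, and the `k` bits of block `j`. To learn bit `l` of block `j`, Bob streams the text made
of the same sentinels, a different separator, and then `2` everywhere except a `1` at position `l`.
A pattern with another sentinel has more than `k` mismatches with it, while pattern `j` has exactly
`k` mismatches if the bit is `1` and `k + 1` if it is `0`. So the memory state after preprocessing
is a one-way message from which Bob reads off `x_i` whenever the algorithm is correct, and the Index
lower bound applies to it with `n = k·d`.
-/

open Finset

theorem card_filter_div_card_le_of_imp {R : Type*} [Fintype R] {p q : R → Prop}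
    [DecidablePred p] [DecidablePred q] (hpq : ∀ ρ, p ρ → q ρ) :
    (#{ρ | p ρ} : ℝ) / Fintype.card R ≤ #{ρ | q ρ} / Fintype.card R := by
  gcongr
  exact hpq _

theorem listHD_cons (a b : ℕ) (X Y : List ℕ) :
    listHD (a :: X) (b :: Y) = (if a = b then 0 else 1) + listHD X Y := by
  simp [listHD]

theorem listHD_append {X₁ Y₁ : List ℕ} (X₂ Y₂ : List ℕ) (h : X₁.length = Y₁.length) :
    listHD (X₁ ++ X₂) (Y₁ ++ Y₂) = listHD X₁ Y₁ + listHD X₂ Y₂ := by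
  simp [listHD, List.zipWith_append h]

theorem listHD_replicate (n a b : ℕ) :
    listHD (List.replicate n a) (List.replicate n b) = if a = b then 0 else n := by
  induction n with
  | zero => simp [listHD]
  | succ n ih =>
    rw [List.replicate_succ, List.replicate_succ, listHD_cons, ih]
    split_ifs <;> omega

theorem listHD_ofFn {n : ℕ} (f g : Fin n → ℕ) :
    listHD (List.ofFn f) (List.ofFn g) = #{i | f i ≠ g i} := by
  induction n with
  | zero => simp [listHD]
  | succ n ih =>
    rw [List.ofFn_succ, List.ofFn_succ, listHD_cons, ih, Fin.card_filter_univ_succ]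
    split_ifs <;> simp_all [add_comm]

def blockPattern {kk : ℕ} (j : ℕ) (bits : Fin kk → Bool) : List ℕ :=
  List.replicate (kk + 1) j ++ 0 :: List.ofFn fun m => if bits m then 1 else 0

def probeText (kk j : ℕ) (l : Fin kk) : List ℕ :=
  List.replicate (kk + 1) j ++ 1 :: List.ofFn fun m : Fin kk => if m = l then 1 else 2

theorem length_blockPattern {kk : ℕ} (j : ℕ) (bits : Fin kk → Bool) :
    (blockPattern j bits).length = 2 * kk + 2 := by
  simp [blockPattern]; omega

theorem length_probeText (kk j : ℕ) (l : Fin kk) : (probeText kk j l).length = 2 * kk + 2 := by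
  simp [probeText]; omega

theorem listHD_blockPattern_probeText {kk : ℕ} (j j' : ℕ) (bits : Fin kk → Bool) (l : Fin kk) :
    listHD (blockPattern j bits) (probeText kk j' l) =
      (if j = j' then 0 else kk + 1) + (kk + if bits l then 0 else 1) := by
  have hmismatch : ({m | (if bits m then 1 else 0) ≠ if m = l then 1 else 2} : Finset (Fin kk)) =
      if bits l then univ.erase l else univ := by
    ext m
    by_cases hm : m = l <;> by_cases hb : bits m <;> split_ifs <;> simp_all
  have hkk : 0 < kk := l.pos
  rw [blockPattern, probeText, listHD_append _ _ (by simp), listHD_replicate, listHD_cons,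
    if_neg zero_ne_one, listHD_ofFn, hmismatch]
  split_ifs <;> simp [card_erase_of_mem] <;> omega

theorem occursEnd_blockPattern_probeText_iff {kk : ℕ} (j j' : ℕ) (bits : Fin kk → Bool)
    (l : Fin kk) :
    occursEnd kk (blockPattern j bits) (probeText kk j' l) ↔ j = j' ∧ bits l = true := by
  rw [occursEnd, length_blockPattern, length_probeText, Nat.sub_self, List.drop_zero,
    listHD_blockPattern_probeText]
  split_ifs <;> simp_all
  omega

def indexDictionary {kk d : ℕ} (x : Fin (kk * d) → Bool) (j : Fin d) : List ℕ :=
  blockPattern j fun m => x (finProdFinEquiv (m, j))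

def indexProbe {kk d : ℕ} (i : Fin (kk * d)) : List ℕ :=
  probeText kk (finProdFinEquiv.symm i).2 (finProdFinEquiv.symm i).1

theorem occursEnd_indexDictionary_indexProbe_iff {kk d : ℕ} (x : Fin (kk * d) → Bool)
    (i : Fin (kk * d)) (j : Fin d) :
    occursEnd kk (indexDictionary x j) (indexProbe i) ↔
      j = (finProdFinEquiv.symm i).2 ∧ x i = true := by
  rw [indexDictionary, indexProbe, occursEnd_blockPattern_probeText_iff, Fin.val_inj]
  refine and_congr_right fun hj ↦ ?_
  rw [hj, Prod.mk.eta, Equiv.apply_symm_apply]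

def indexAnswer {kk d b : ℕ} (A : DetAlg d b) (i : Fin (kk * d)) (s : Fin (2 ^ b)) : Bool :=
  decide ((finProdFinEquiv.symm i).2 ∈ A.out ((indexProbe i).foldl A.step s))

theorem StreamCorrect.indexAnswer_correct {kk d b : ℕ} {R : Type} [Fintype R]
    {A : R → DetAlg d b} (hA : StreamCorrect kk d b R A) (x : Fin (kk * d) → Bool)
    (i : Fin (kk * d)) :
    (2 : ℝ) / 3 < #{ρ | indexAnswer (A ρ) i ((A ρ).init (indexDictionary x)) = x i} /
      Fintype.card R := by
  refine (hA (indexDictionary x) (indexProbe i)).trans_le (card_filter_div_card_le_of_imp ?_)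
  intro ρ hρ
  rw [indexAnswer, ← runAlg, hρ]
  simp [occursEnd_indexDictionary_indexProbe_iff]

/-- Given the Ω(n) lower bound for Index, any randomized streaming algorithm
solving dictionary matching with `k` mismatches on `d` patterns correctly with
probability `> 2/3` must use `Ω(k·d)` bits of memory. -/
theorem stmt17 (hIndex : IndexLB) :
    ∃ c : ℝ, 0 < c ∧
      ∀ (kk d b : ℕ), 1 ≤ kk → 1 ≤ d →
        ∀ (R : Type) [Fintype R] [Nonempty R] (A : R → DetAlg d b),
          StreamCorrect kk d b R A → c * ((kk : ℝ) * (d : ℝ)) ≤ (b : ℝ) := by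
  obtain ⟨c, hc, hIndexLB⟩ := hIndex
  refine ⟨c, hc, fun kk d b _ _ R _ _ A hA ↦ ?_⟩
  exact_mod_cast hIndexLB (kk * d) b R (fun x ρ ↦ (A ρ).init (indexDictionary x))
    (fun i s ρ ↦ indexAnswer (A ρ) i s) hA.indexAnswer_correct
end
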